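/- arXiv:2309.07532 — 4 statements merged into one kernel-verified Lean document; each statement's English description precedes it below -/
import Mathlib

section
/- If at every time slot the number of patients whose visit interval covers that slot is at most the number of available rooms, then there exists an assignment of each patient to a single room such that no two patients with overlapping visit intervals share a room. -/
/-!
Assign rooms greedily in order of starting slot. When patient `p` is placed, every patient
placed before it that overlaps `p` started no later than `p`, so it is still present at slot
`h p`; together with `p` these number at most `|R|`, leaving a room free for `p`.
-/

open Finset

namespace SimpleGraph

variable {V R : Type*} (G : SimpleGraph V)

def IsColoringOn (f : V → R) (S : Finset V) : Prop :=
  ∀ p ∈ S, ∀ q ∈ S, G.Adj p q → f p ≠ f q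

variable {G} in
theorem IsColoringOn.update_insert [DecidableEq V] {f : V → R} {s : Finset V} {a : V} {r : R}
    (hf : G.IsColoringOn f s) (hr : ∀ q ∈ s, G.Adj a q → f q ≠ r) :
    G.IsColoringOn (Function.update f a r) (insert a s) := by
  have hne : ∀ p ∈ insert a s, ∀ q ∈ insert a s, G.Adj p q → p ≠ a →
      Function.update f a r p ≠ Function.update f a r q := by
    intro p hp q hq hpq hpa
    have hps : p ∈ s := (mem_insert.mp hp).resolve_left hpa
    rw [Function.update_of_ne hpa]
    by_cases hqa : q = a
    · subst hqa
      rw [Function.update_self]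
      exact hr p hps hpq.symm
    · rw [Function.update_of_ne hqa]
      exact hf p hps q ((mem_insert.mp hq).resolve_left hqa) hpq
  intro p hp q hq hpq
  by_cases hpa : p = a
  · exact (hne q hq p hp hpq.symm (hpa ▸ G.ne_of_adj hpq).symm).symm
  · exact hne p hp q hq hpq hpa

theorem exists_isColoringOn_of_card_lowerNeighbors_lt [Fintype R] [Nonempty R] {α : Type*}
    [LinearOrder α] [DecidableRel G.Adj] (key : V → α) (S : Finset V)
    (hS : ∀ p ∈ S, #{q ∈ S | key q ≤ key p ∧ G.Adj p q} < Fintype.card R) :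
    ∃ f : V → R, G.IsColoringOn f S := by
  classical
  induction S using Finset.induction_on_max_value key with
  | empty => exact ⟨fun _ => Classical.arbitrary R, by simp [IsColoringOn]⟩
  | insert a s has hmax ih =>
    obtain ⟨f, hf⟩ := ih fun p hp =>
      (card_le_card (filter_subset_filter _ (subset_insert a s))).trans_lt
        (hS p (mem_insert_of_mem hp))
    set N := {q ∈ s | G.Adj a q}
    have hN : #(N.image f) < #(univ : Finset R) :=
      calc #(N.image f) ≤ #N := card_image_le
        _ ≤ #{q ∈ insert a s | key q ≤ key a ∧ G.Adj a q} :=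
          card_le_card fun q hq => by
            obtain ⟨hqs, hadj⟩ := mem_filter.mp hq
            exact mem_filter.mpr ⟨mem_insert_of_mem hqs, hmax q hqs, hadj⟩
        _ < #(univ : Finset R) := hS a (mem_insert_self a s)
    obtain ⟨r, -, hr⟩ := exists_mem_notMem_of_card_lt_card hN
    refine ⟨Function.update f a r, hf.update_insert fun q hq hadj hfq => hr ?_⟩
    exact mem_image.mpr ⟨q, mem_filter.mpr ⟨hq, hadj⟩, hfq⟩

end SimpleGraph

section Visits

variable {P R : Type*} (h v : P → ℕ)

def overlapGraph : SimpleGraph P where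
  Adj p q := p ≠ q ∧ ∃ t, h p ≤ t ∧ t < h p + v p ∧ h q ≤ t ∧ t < h q + v q
  symm := ⟨fun _ _ ⟨hne, t, h₁, h₂, h₃, h₄⟩ => ⟨hne.symm, t, h₃, h₄, h₁, h₂⟩⟩
  loopless := ⟨fun _ hp => hp.1 rfl⟩

variable {h v}

theorem pos_of_overlapGraph_adj {p q : P} (hpq : (overlapGraph h v).Adj p q) : 0 < v p := by
  obtain ⟨-, t, h₁, h₂, -⟩ := hpq
  omega

theorem lt_add_of_overlapGraph_adj {p q : P} (hpq : (overlapGraph h v).Adj p q) :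
    h p < h q + v q :=
  let ⟨_, _, h₁, _, _, h₄⟩ := hpq
  h₁.trans_lt h₄

theorem card_lowerNeighbors_overlapGraph_lt [Fintype P] [Fintype R] [Nonempty R]
    [DecidableRel (overlapGraph h v).Adj]
    (hload : ∀ t, #{p | h p ≤ t ∧ t < h p + v p} ≤ Fintype.card R) (p : P) :
    #{q | h q ≤ h p ∧ (overlapGraph h v).Adj p q} < Fintype.card R := by
  classical
  set N : Finset P := {q | h q ≤ h p ∧ (overlapGraph h v).Adj p q}
  set C : Finset P := {q | h q ≤ h p ∧ h p < h q + v q}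
  by_cases hv : v p = 0
  · have hN : N = ∅ := filter_false_of_mem fun q _ hq => hv.not_gt (pos_of_overlapGraph_adj hq.2)
    rw [hN, card_empty]
    exact Fintype.card_pos
  · have hsub : insert p N ⊆ C := by
      intro q hq
      rcases mem_insert.mp hq with rfl | hq
      · exact mem_filter.mpr ⟨mem_univ q, le_rfl, by omega⟩
      · obtain ⟨hqp, hadj⟩ := (mem_filter.mp hq).2
        exact mem_filter.mpr ⟨mem_univ q, hqp, lt_add_of_overlapGraph_adj hadj⟩
    have hp : p ∉ N := fun hp => (overlapGraph h v).loopless.irrefl p (mem_filter.mp hp).2.2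
    calc #N < #(insert p N) := by rw [card_insert_of_notMem hp]; omega
      _ ≤ #C := card_le_card hsub
      _ ≤ Fintype.card R := hload (h p)

end Visits

/-- If at every time slot the number of patients whose visit interval covers that slot
is at most the number of rooms, there is a room assignment such that no two patients
with overlapping visit intervals share a room. -/
theorem stmt_0 {P R : Type*} [Fintype P] [Fintype R] [Nonempty R]
    (h v : P → ℕ)
    (hload : ∀ t : ℕ,
      (Finset.univ.filter (fun p : P => h p ≤ t ∧ t < h p + v p)).card ≤ Fintype.card R) :
    ∃ f : P → R, ∀ p q : P, p ≠ q →
      (∃ t : ℕ, h p ≤ t ∧ t < h p + v p ∧ h q ≤ t ∧ t < h q + v q) →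
      f p ≠ f q := by
  classical
  obtain ⟨f, hf⟩ := (overlapGraph h v).exists_isColoringOn_of_card_lowerNeighbors_lt h univ
    fun p _ => card_lowerNeighbors_overlapGraph_lt hload p
  exact ⟨f, fun p q hpq hov => hf p (mem_univ p) q (mem_univ q) ⟨hpq, hov⟩⟩
end

section
/- The optimal value of the multiple-knapsack relaxation is an upper bound on the number of non-critical patients that can simultaneously be scheduled on chairs in any feasible schedule. -/
open Finset

/-! Give patient `p` weight `1` on its chair. The load of chair `s` splits by day; on each day the
infusions on `s` occupy pairwise disjoint slot intervals inside `[m + 1, H + 1)`, so their total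
duration is at most `H - m`, and summing over the days gives the knapsack capacity. -/

theorem Finset.sum_card_le_card_of_pairwiseDisjoint {ι α : Type*} [DecidableEq α]
    {A : Finset ι} {I : ι → Finset α} {W : Finset α}
    (hdisj : (A : Set ι).PairwiseDisjoint I) (hsub : ∀ i ∈ A, I i ⊆ W) :
    ∑ i ∈ A, #(I i) ≤ #W := by
  rw [← card_biUnion hdisj]
  exact card_le_card (biUnion_subset.2 hsub)

theorem Finset.sum_le_of_pairwiseDisjoint_Ico {ι : Type*} {A : Finset ι} {a len : ι → ℕ}
    {lo hi : ℕ} (hdisj : (A : Set ι).PairwiseDisjoint fun i => Ico (a i) (a i + len i))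
    (hsub : ∀ i ∈ A, lo ≤ a i ∧ a i + len i ≤ hi) :
    ∑ i ∈ A, len i ≤ hi - lo := by
  have key := sum_card_le_card_of_pairwiseDisjoint hdisj fun i hi =>
    Ico_subset_Ico (hsub i hi).1 (hsub i hi).2
  simpa only [Nat.card_Ico, Nat.add_sub_cancel_left] using key

theorem Finset.sum_filter_map_snd_eq_some {ι α β M : Type*} [DecidableEq ι] [Fintype α]
    [DecidableEq α] [DecidableEq β] [AddCommMonoid M] (s : Finset ι) (g : ι → Option (α × β))
    (w : ι → M) (b : β) :
    ∑ i ∈ s with (g i).map Prod.snd = some b, w i =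
      ∑ a, ∑ i ∈ s with g i = some (a, b), w i := by
  rw [← sum_biUnion]
  · congr 1
    ext i
    rcases g i with _ | ⟨a', b'⟩ <;> simp
  · intro a _ a' _ ha
    exact disjoint_filter.2 fun i _ h h' => ha (by simp_all)

theorem Option.sum_ite_eq_some {α : Type*} [Fintype α] [DecidableEq α] (o : Option α) :
    ∑ a, (if o = some a then 1 else 0) = if o.isSome then 1 else 0 := by
  cases o <;> simp

namespace ChairSchedule

variable {Q T S : Type*} (σ : Q → Option (T × S × ℕ))

def dayChair (p : Q) : Option (T × S) := (σ p).map fun x => (x.1, x.2.1)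

def chair (p : Q) : Option S := (σ p).map fun x => x.2.1

def startSlot (p : Q) : ℕ := ((σ p).map fun x => x.2.2).getD 0

theorem chair_eq (p : Q) : chair σ p = (dayChair σ p).map Prod.snd := by
  simp only [chair, dayChair, Option.map_map]
  rfl

theorem eq_some_of_dayChair_eq {p : Q} {t : T} {s : S} (h : dayChair σ p = some (t, s)) :
    σ p = some (t, s, startSlot σ p) := by
  simp only [dayChair, startSlot] at h ⊢
  rcases hp : σ p with _ | ⟨t', s', h'⟩ <;> simp_all

variable [Fintype Q] [DecidableEq T] [DecidableEq S] {f : Q → ℕ} {H m : ℕ}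

theorem sum_duration_dayChair_le
    (hstart : ∀ p t s hp, σ p = some (t, s, hp) → m + 1 ≤ hp ∧ hp + f p ≤ H + 1)
    (hdisj : ∀ p q t s hp hq, p ≠ q → σ p = some (t, s, hp) → σ q = some (t, s, hq) →
      Disjoint (Ico hp (hp + f p)) (Ico hq (hq + f q)))
    (t : T) (s : S) :
    ∑ p with dayChair σ p = some (t, s), f p ≤ H - m := by
  have hσ : ∀ p ∈ ({p | dayChair σ p = some (t, s)} : Finset Q),
      σ p = some (t, s, startSlot σ p) := fun p hp =>
    eq_some_of_dayChair_eq σ (mem_filter.1 hp).2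
  have key := sum_le_of_pairwiseDisjoint_Ico (a := startSlot σ) (len := f)
    (fun p hp q hq hpq => hdisj p q t s _ _ hpq (hσ p hp) (hσ q hq))
    (fun p hp => hstart p t s _ (hσ p hp))
  simpa only [Nat.add_sub_add_right] using key

theorem sum_duration_chair_le [Fintype T]
    (hstart : ∀ p t s hp, σ p = some (t, s, hp) → m + 1 ≤ hp ∧ hp + f p ≤ H + 1)
    (hdisj : ∀ p q t s hp hq, p ≠ q → σ p = some (t, s, hp) → σ q = some (t, s, hq) →
      Disjoint (Ico hp (hp + f p)) (Ico hq (hq + f q)))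
    (s : S) :
    ∑ p with chair σ p = some s, f p ≤ Fintype.card T * (H - m) := calc
  ∑ p with chair σ p = some s, f p = ∑ t, ∑ p with dayChair σ p = some (t, s), f p := by
    classical
    simp only [chair_eq]
    exact sum_filter_map_snd_eq_some _ _ _ _
  _ ≤ ∑ _t : T, (H - m) := sum_le_sum fun t _ => sum_duration_dayChair_le σ hstart hdisj t s
  _ = Fintype.card T * (H - m) := by rw [sum_const, card_univ, smul_eq_mul]

end ChairSchedule

open ChairSchedule in
theorem stmt_4_general {Q T S : Type*} [Fintype Q] [Fintype T] [Fintype S]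
    [DecidableEq T] [DecidableEq S]
    (f : Q → ℕ) (H m : ℕ)
    (σ : Q → Option (T × S × ℕ))
    (hstart : ∀ p t s hp, σ p = some (t, s, hp) → m + 1 ≤ hp ∧ hp + f p ≤ H + 1)
    (hdisj : ∀ p q t s hp hq, p ≠ q → σ p = some (t, s, hp) → σ q = some (t, s, hq) →
      Disjoint (Finset.Ico hp (hp + f p)) (Finset.Ico hq (hq + f q))) :
    ∃ μ : Q → S → ℕ,
      (∀ p s, μ p s ≤ 1) ∧
      (∀ p, ∑ s : S, μ p s ≤ 1) ∧
      (∀ s : S, ∑ p : Q, f p * μ p s ≤ Fintype.card T * (H - m)) ∧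
      ∑ p : Q, ∑ s : S, μ p s = (univ.filter (fun p : Q => σ p ≠ none)).card := by
  have hrow (p : Q) :
      ∑ s, (if chair σ p = some s then 1 else 0) = if (σ p).isSome then 1 else 0 := by
    rw [Option.sum_ite_eq_some, chair, Option.isSome_map]
  refine ⟨fun p s => if chair σ p = some s then 1 else 0,
    fun p s => ite_le_one le_rfl zero_le_one, fun p => ?_, fun s => ?_, ?_⟩
  · rw [hrow]
    split_ifs <;> simp
  · simpa only [mul_ite, mul_one, mul_zero, ← sum_filter] using
      sum_duration_chair_le σ hstart hdisj s
  · simp only [hrow, ← Option.ne_none_iff_isSome, sum_boole, Nat.cast_id]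

/-- Every feasible chair schedule induces a feasible solution of the multiple-knapsack
relaxation with value equal to the number of chair-scheduled patients; hence the
knapsack optimum is an upper bound. -/
theorem stmt_4 {Q T S : Type*} [Fintype Q] [Fintype T] [Fintype S]
    [DecidableEq T] [DecidableEq S]
    (f v : Q → ℕ) (H m : ℕ) (hm : ∀ p, m ≤ v p)
    (σ : Q → Option (T × S × ℕ))
    (hstart : ∀ p t s hp, σ p = some (t, s, hp) → m + 1 ≤ hp ∧ hp + f p ≤ H + 1)
    (hdisj : ∀ p q t s hp hq, p ≠ q → σ p = some (t, s, hp) → σ q = some (t, s, hq) →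
      Disjoint (Finset.Ico hp (hp + f p)) (Finset.Ico hq (hq + f q))) :
    ∃ μ : Q → S → ℕ,
      (∀ p s, μ p s ≤ 1) ∧
      (∀ p, ∑ s : S, μ p s ≤ 1) ∧
      (∀ s : S, ∑ p : Q, f p * μ p s ≤ Fintype.card T * (H - m)) ∧
      ∑ p : Q, ∑ s : S, μ p s = (univ.filter (fun p : Q => σ p ≠ none)).card :=
  stmt_4_general f H m σ hstart hdisj
end

section
/- If in every feasible schedule the total infusion time on the chair with the s-th earliest first start is at most C_s := |H| − ⌈s/|R|⌉·m, then the maximum number of non-critical patients on chairs in one day is bounded above by the optimum of the assignment problem: maximize Σ_{p,s} μ_{ps} subject to Σ_s μ_{ps} ≤ 1 for each p and Σ_p f_p μ_{ps} ≤ C_s for each chair s. -/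
open Finset

section AssignmentOf

variable {Q ι : Type*} [Fintype Q] [Fintype ι] [DecidableEq ι]

def assignmentOf (chair : Q → ι) (p : Q) (s : ι) : ℕ :=
  if chair p = s then 1 else 0

omit [Fintype Q] [Fintype ι] in
lemma assignmentOf_le_one (chair : Q → ι) (p : Q) (s : ι) : assignmentOf chair p s ≤ 1 := by
  unfold assignmentOf
  split <;> omega

omit [Fintype Q] in
lemma sum_assignmentOf (chair : Q → ι) (p : Q) : ∑ s, assignmentOf chair p s = 1 := by
  simp [assignmentOf]

omit [Fintype ι] in
lemma sum_mul_assignmentOf (chair : Q → ι) (f : Q → ℕ) (s : ι) :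
    ∑ p, f p * assignmentOf chair p s = ∑ p ∈ univ.filter (fun p => chair p = s), f p := by
  simp [assignmentOf, mul_ite, sum_filter]

lemma sum_sum_assignmentOf (chair : Q → ι) :
    ∑ p, ∑ s, assignmentOf chair p s = Fintype.card Q := by
  simp [sum_assignmentOf]

end AssignmentOf

theorem stmt_7_general {Q : Type*} [Fintype Q] (n : ℕ)
    (f : Q → ℕ)
    (C : Fin n → ℕ)
    (chair : Q → Fin n)
    (hcap : ∀ s : Fin n, ∑ p ∈ univ.filter (fun p : Q => chair p = s), f p ≤ C s) :
    ∃ μ : Q → Fin n → ℕ,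
      (∀ p s, μ p s ≤ 1) ∧
      (∀ p, ∑ s : Fin n, μ p s ≤ 1) ∧
      (∀ s : Fin n, ∑ p : Q, f p * μ p s ≤ C s) ∧
      (∑ p : Q, ∑ s : Fin n, μ p s = Fintype.card Q) ∧
      ∀ opt : ℕ,
        (∀ μ' : Q → Fin n → ℕ, (∀ p s, μ' p s ≤ 1) → (∀ p, ∑ s : Fin n, μ' p s ≤ 1) →
          (∀ s : Fin n, ∑ p : Q, f p * μ' p s ≤ C s) →
          ∑ p : Q, ∑ s : Fin n, μ' p s ≤ opt) →
        Fintype.card Q ≤ opt := by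
  have hle := assignmentOf_le_one chair
  have hrow : ∀ p, ∑ s, assignmentOf chair p s ≤ 1 := fun p => (sum_assignmentOf chair p).le
  have hload : ∀ s, ∑ p, f p * assignmentOf chair p s ≤ C s := fun s =>
    (sum_mul_assignmentOf chair f s).trans_le (hcap s)
  refine ⟨assignmentOf chair, hle, hrow, hload, sum_sum_assignmentOf chair, fun opt hopt => ?_⟩
  exact (sum_sum_assignmentOf chair).symm.le.trans (hopt _ hle hrow hload)

/-- If chair `s` (1-indexed, in order of earliest first start) can host at most
`C s = H - ⌈s/R⌉·m` total infusion time, then a feasible single-day schedule induces a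
feasible solution of the capacitated assignment problem with value equal to the number of
chair-scheduled patients, hence that number is bounded by the assignment optimum. -/
theorem stmt_7 {Q : Type*} [Fintype Q] (n H R m : ℕ)
    (f : Q → ℕ) (hf : ∀ p, 0 < f p)
    (C : Fin n → ℕ) (hC : ∀ s : Fin n, C s = H - ((s.1 + 1 + R - 1) / R) * m)
    (chair : Q → Fin n)
    (hcap : ∀ s : Fin n, ∑ p ∈ univ.filter (fun p : Q => chair p = s), f p ≤ C s) :
    ∃ μ : Q → Fin n → ℕ,
      (∀ p s, μ p s ≤ 1) ∧
      (∀ p, ∑ s : Fin n, μ p s ≤ 1) ∧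
      (∀ s : Fin n, ∑ p : Q, f p * μ p s ≤ C s) ∧
      (∑ p : Q, ∑ s : Fin n, μ p s = Fintype.card Q) ∧
      ∀ opt : ℕ,
        (∀ μ' : Q → Fin n → ℕ, (∀ p s, μ' p s ≤ 1) → (∀ p, ∑ s : Fin n, μ' p s ≤ 1) →
          (∀ s : Fin n, ∑ p : Q, f p * μ' p s ≤ C s) →
          ∑ p : Q, ∑ s : Fin n, μ' p s ≤ opt) →
        Fintype.card Q ≤ opt :=
  stmt_7_general n f C chair hcap
end

section
/- Consequently, in any feasible single-day schedule with uniform minimum visit length m and |R| rooms, the number of chairs that contain an ongoing infusion during slot h is at most ⌊(h−1)/m⌋·|R| for every slot h; in particular no chair is used during slots 1,…,m. -/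
open Finset

/-
Every chair busy at slot `h` hosts a patient whose visit, of length at least `m` and
contained in the slots `1, …, h - 1`, covers one of the slots `m, 2m, …, ⌊(h-1)/m⌋·m`.
At each of these slots at most `|R|` visits are ongoing, so at most `⌊(h-1)/m⌋·|R|`
patients can be receiving an infusion at slot `h`, and distinct busy chairs need
distinct patients.
-/

theorem Nat.exists_pos_mul_mem_Ico {a m : ℕ} (hm : 0 < m) (ha : 1 ≤ a) :
    ∃ j, 0 < j ∧ a ≤ j * m ∧ j * m < a + m := by
  refine ⟨(a - 1) / m + 1, Nat.succ_pos _, ?_⟩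
  have hdiv := Nat.div_add_mod' (a - 1) m
  have hmod := Nat.mod_lt (a - 1) hm
  constructor <;> rw [add_mul, one_mul] <;> omega

theorem card_filter_end_le_div_mul {Q : Type*} [Fintype Q] {R m : ℕ} (hm : 0 < m)
    {a v : Q → ℕ} (ha : ∀ p, 1 ≤ a p) (hv : ∀ p, m ≤ v p)
    (hrooms : ∀ t, #{p | a p ≤ t ∧ t < a p + v p} ≤ R) (h : ℕ) :
    #{p | a p + v p ≤ h} ≤ (h - 1) / m * R := by
  classical
  calc #{p | a p + v p ≤ h}
      ≤ #((Icc 1 ((h - 1) / m)).biUnion fun j => {p | a p ≤ j * m ∧ j * m < a p + v p}) := by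
        refine card_le_card fun p hp => ?_
        obtain ⟨j, hj, hle, hlt⟩ := Nat.exists_pos_mul_mem_Ico hm (ha p)
        have := hv p
        simp only [mem_biUnion, mem_Icc, mem_filter, mem_univ, true_and] at hp ⊢
        exact ⟨j, ⟨hj, (Nat.le_div_iff_mul_le hm).2 (by omega)⟩, hle, by omega⟩
    _ ≤ #(Icc 1 ((h - 1) / m)) * R := card_biUnion_le_card_mul _ _ _ fun j _ => hrooms (j * m)
    _ = (h - 1) / m * R := by simp

theorem card_filter_exists_le_card_filter {Q S : Type*} [Fintype Q] [Fintype S] [DecidableEq S]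
    (c : Q → S) {P P' : Q → Prop} [DecidablePred P] [DecidablePred P'] (hPP' : ∀ p, P p → P' p) :
    #{s | ∃ p, c p = s ∧ P p} ≤ #{p | P' p} := by
  calc #{s | ∃ p, c p = s ∧ P p}
      = #(image c {p | P p}) := by congr 1; ext s; simp [and_comm]
    _ ≤ #{p | P p} := card_image_le
    _ ≤ #{p | P' p} := card_le_card fun p => by simpa using hPP' p

theorem stmt_18_general {Q S : Type*} [Fintype Q] [Fintype S] [DecidableEq S]
    (R m : ℕ) (hm : 0 < m)
    (a v : Q → ℕ) (ha : ∀ p, 1 ≤ a p) (hv : ∀ p, m ≤ v p)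
    (hrooms : ∀ h : ℕ,
      (univ.filter (fun p : Q => a p ≤ h ∧ h < a p + v p)).card ≤ R)
    (c : Q → S) (i f : Q → ℕ)
    (hprec : ∀ p, a p + v p ≤ i p) :
    ∀ h : ℕ,
      (univ.filter (fun s : S => ∃ p, c p = s ∧ i p ≤ h ∧ h < i p + f p)).card
        ≤ ((h - 1) / m) * R ∧
      (h ≤ m →
        (univ.filter (fun s : S => ∃ p, c p = s ∧ i p ≤ h ∧ h < i p + f p)).card = 0) := by
  intro h
  have busy : #{s | ∃ p, c p = s ∧ i p ≤ h ∧ h < i p + f p} ≤ (h - 1) / m * R :=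
    (card_filter_exists_le_card_filter c fun p hp => (hprec p).trans hp.1).trans
      (card_filter_end_le_div_mul hm ha hv hrooms h)
  refine ⟨busy, fun hhm => ?_⟩
  rwa [Nat.div_eq_of_lt (by omega), zero_mul, Nat.le_zero] at busy

/-- Combining the visit-throughput bound with the visit-before-infusion precedence:
with minimum visit length `m` and `R` rooms, the number of chairs containing an ongoing
infusion during slot `h` is at most `⌊(h-1)/m⌋·R`; in particular no chair is used
during slots `1, …, m`. -/
theorem stmt_18 {Q S : Type*} [Fintype Q] [Fintype S] [DecidableEq S]
    (R m H : ℕ) (hm : 0 < m)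
    (a v : Q → ℕ) (ha : ∀ p, 1 ≤ a p) (hv : ∀ p, m ≤ v p)
    (hrooms : ∀ h : ℕ,
      (univ.filter (fun p : Q => a p ≤ h ∧ h < a p + v p)).card ≤ R)
    (c : Q → S) (i f : Q → ℕ)
    (hprec : ∀ p, a p + v p ≤ i p)
    (hchair : ∀ (h : ℕ) (s : S),
      (univ.filter (fun p : Q => c p = s ∧ i p ≤ h ∧ h < i p + f p)).card ≤ 1) :
    ∀ h : ℕ,
      (univ.filter (fun s : S => ∃ p, c p = s ∧ i p ≤ h ∧ h < i p + f p)).card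
        ≤ ((h - 1) / m) * R ∧
      (h ≤ m →
        (univ.filter (fun s : S => ∃ p, c p = s ∧ i p ≤ h ∧ h < i p + f p)).card = 0) :=
  stmt_18_general R m hm a v ha hv hrooms c i f hprec
end
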